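/- arXiv:1702.06150 — 2 statements merged into one kernel-verified Lean document; each statement's English description precedes it below -/
import Mathlib

section
/- For all integers n ≥ 0 and p ≥ 0, the number of Dyck paths of semilength n with all peaks at even height and exactly p peaks equals the number of Motzkin paths M of length n with no flatstep at ground level that satisfy (u(M) − uu(M)) + (f(M) − fu(M)) = p, where u(M) is the number of upsteps of M, uu(M) is the number of occurrences in M of an upstep immediately followed by an upstep, f(M) is the number of flatsteps of M, and fu(M) is the number of occurrences in M of a flatstep immediately followed by an upstep. -/
/-- A Dyck path: each step is +1 (upstep U) or -1 (downstep D), all partial sums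
are nonnegative, and the total sum is 0. -/
def IsDyckPath (P : List ℤ) : Prop :=
  (∀ s ∈ P, s = 1 ∨ s = -1) ∧ (∀ k, 0 ≤ (P.take k).sum) ∧ P.sum = 0

/-- A Motzkin path: each step is +1 (U), 0 (F), or -1 (D), all partial sums
are nonnegative, and the total sum is 0. -/
def IsMotzkinPath (M : List ℤ) : Prop :=
  (∀ s ∈ M, s = 1 ∨ s = 0 ∨ s = -1) ∧ (∀ k, 0 ≤ (M.take k).sum) ∧ M.sum = 0

/-- A peak at position `i`: an upstep at `i` immediately followed by a downstep. -/
def IsPeak (P : List ℤ) (i : ℕ) : Prop :=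
  P[i]? = some 1 ∧ P[i + 1]? = some (-1)

/-- The height of the peak at position `i`: the level reached just after the upstep. -/
def peakHeight (P : List ℤ) (i : ℕ) : ℤ := (P.take (i + 1)).sum

/-- Every peak is at odd height; by convention the empty path has one peak at height 0
(so `AllPeaksOdd []` is false). -/
def AllPeaksOdd (P : List ℤ) : Prop :=
  (P = [] → Odd (0 : ℤ)) ∧ ∀ i, IsPeak P i → Odd (peakHeight P i)

/-- Every peak is at even height; by convention the empty path has one peak at height 0. -/
def AllPeaksEven (P : List ℤ) : Prop :=
  (P = [] → Even (0 : ℤ)) ∧ ∀ i, IsPeak P i → Even (peakHeight P i)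

/-- The Motzkin path has no flatstep at ground level. -/
def NoGroundFlat (M : List ℤ) : Prop :=
  ∀ i, M[i]? = some 0 → (M.take i).sum ≠ 0

/-- Replacement of a contiguous pair of Dyck steps by a Motzkin step:
(U,U) ↦ U, (D,U) ↦ F, (D,D) ↦ D. -/
def pairStep (a b : ℤ) : ℤ :=
  if a = 1 ∧ b = 1 then 1
  else if a = -1 ∧ b = 1 then 0
  else if a = -1 ∧ b = -1 then -1
  else 0

/-- Split a list of steps into contiguous pairs and replace each pair via `pairStep`. -/
def pairContract (P : List ℤ) : List ℤ :=
  (List.range (P.length / 2)).map fun k => pairStep (P.getD (2 * k) 0) (P.getD (2 * k + 1) 0)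

/-- The number of downsteps ending at ground level. -/
def groundDownCount (P : List ℤ) : ℕ :=
  ((Finset.range P.length).filter fun i =>
    P[i]? = some (-1) ∧ (P.take (i + 1)).sum = 0).card

/-- The number of flatsteps at ground level. -/
def groundFlatCount (M : List ℤ) : ℕ :=
  ((Finset.range M.length).filter fun i =>
    M[i]? = some 0 ∧ (M.take i).sum = 0).card

/-- The number of peaks. -/
def peakCount (P : List ℤ) : ℕ :=
  ((Finset.range P.length).filter fun i =>
    P[i]? = some 1 ∧ P[i + 1]? = some (-1)).card

/-- The number of occurrences of an upstep immediately followed by an upstep. -/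
def uuCount (M : List ℤ) : ℕ :=
  ((Finset.range M.length).filter fun i =>
    M[i]? = some 1 ∧ M[i + 1]? = some 1).card

/-- The number of occurrences of a flatstep immediately followed by an upstep. -/
def fuCount (M : List ℤ) : ℕ :=
  ((Finset.range M.length).filter fun i =>
    M[i]? = some 0 ∧ M[i + 1]? = some 1).card


namespace EvenPeaksAux

/-- expansion block of a Motzkin step -/
def block (s : ℤ) : List ℤ := if s = 1 then [1, 1] else if s = 0 then [-1, 1] else [-1, -1]

def expand (M : List ℤ) : List ℤ := M.flatMap block

@[simp] lemma block_length (s : ℤ) : (block s).length = 2 := by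
  unfold block; split_ifs <;> rfl

@[simp] lemma expand_nil : expand [] = [] := rfl

lemma expand_cons (s : ℤ) (M : List ℤ) : expand (s :: M) = block s ++ expand M := rfl

@[simp] lemma expand_length (M : List ℤ) : (expand M).length = 2 * M.length := by
  induction M with
  | nil => rfl
  | cons a M ih => simp [expand_cons, ih]; ring

lemma block_sum {s : ℤ} (hs : s = 1 ∨ s = 0 ∨ s = -1) : (block s).sum = 2 * s := by
  rcases hs with h | h | h <;> subst h <;> simp [block]

def fst (s : ℤ) : ℤ := if s = 1 then 1 else -1
def snd (s : ℤ) : ℤ := if s = 1 then 1 else if s = 0 then 1 else -1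

lemma expand_get?_even (M : List ℤ) (k : ℕ) :
    (expand M)[2 * k]? = (M[k]?).map fst := by
  induction M generalizing k with
  | nil => simp [expand]
  | cons a M ih =>
    cases k with
    | zero =>
      rw [expand_cons, List.getElem?_append_left (by simp)]
      unfold block fst; split_ifs <;> simp_all
    | succ k =>
      rw [expand_cons, List.getElem?_append_right (by simp only [block_length]; omega)]
      simp only [block_length]
      have : 2 * (k + 1) - 2 = 2 * k := by omega
      rw [this, ih]
      rfl

lemma expand_get?_odd (M : List ℤ) (k : ℕ) :
    (expand M)[2 * k + 1]? = (M[k]?).map snd := by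
  induction M generalizing k with
  | nil => simp [expand]
  | cons a M ih =>
    cases k with
    | zero =>
      rw [expand_cons, List.getElem?_append_left (by simp)]
      unfold block snd; split_ifs <;> simp_all
    | succ k =>
      rw [expand_cons, List.getElem?_append_right (by simp only [block_length]; omega)]
      simp only [block_length]
      have : 2 * (k + 1) + 1 - 2 = 2 * k + 1 := by omega
      rw [this, ih]
      rfl

lemma expand_take_even (M : List ℤ) (hM : ∀ s ∈ M, s = 1 ∨ s = 0 ∨ s = -1) (k : ℕ) :
    ((expand M).take (2 * k)).sum = 2 * (M.take k).sum := by
  induction M generalizing k with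
  | nil => simp [expand]
  | cons a M ih =>
    cases k with
    | zero => simp
    | succ k =>
      rw [expand_cons, List.take_append]
      have h2 : 2 * (k + 1) - (block a).length = 2 * k := by
        simp only [block_length]; omega
      have h3 : (block a).take (2 * (k+1)) = block a :=
        List.take_of_length_le (by simp only [block_length]; omega)
      rw [h2, h3, List.sum_append, ih (fun s hs => hM s (by simp [hs]))]
      have := block_sum (hM a (by simp))
      simp only [this]
      rw [List.take_succ_cons, List.sum_cons]
      ring

lemma expand_take_odd (M : List ℤ) (hM : ∀ s ∈ M, s = 1 ∨ s = 0 ∨ s = -1) (k : ℕ) :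
    ((expand M).take (2 * k + 1)).sum = 2 * (M.take k).sum + ((M[k]?).map fst).getD 0 := by
  by_cases hk : k < M.length
  · have h2 : 2 * k < (expand M).length := by simp; omega
    have hs := List.sum_take_succ (expand M) (2 * k) h2
    rw [hs, expand_take_even M hM k]
    congr 1
    have hg := expand_get?_even M k
    have h1 : M[k]? = some (M[k]) := List.getElem?_eq_getElem hk
    rw [h1] at hg
    have h3 : (expand M)[2 * k]? = some ((expand M)[2 * k]) := List.getElem?_eq_getElem h2
    rw [h3] at hg
    simp only [Option.map_some] at hg
    rw [Option.some_inj.mp hg, h1]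
    rfl
  · have hfull : (expand M).take (2 * k + 1) = expand M :=
      List.take_of_length_le (by simp; omega)
    have hfull2 : (expand M).take (2 * k) = expand M :=
      List.take_of_length_le (by simp; omega)
    have hnone : M[k]? = none := List.getElem?_eq_none_iff.mpr (by omega)
    have h4 := expand_take_even M hM k
    rw [hfull2] at h4
    rw [hfull, hnone, h4]
    simp

lemma expand_sum (M : List ℤ) (hM : ∀ s ∈ M, s = 1 ∨ s = 0 ∨ s = -1) :
    (expand M).sum = 2 * M.sum := by
  have h := expand_take_even M hM M.length
  rw [List.take_of_length_le (by simp), List.take_of_length_le (le_refl _)] at h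
  exact h

lemma expand_steps (M : List ℤ) : ∀ t ∈ expand M, t = 1 ∨ t = -1 := by
  intro t ht
  simp only [expand, List.mem_flatMap] at ht
  obtain ⟨s, _, hts⟩ := ht
  unfold block at hts
  split_ifs at hts <;> simp at hts <;> omega

lemma get?_valid {M : List ℤ} (hM : ∀ s ∈ M, s = 1 ∨ s = 0 ∨ s = -1) {k : ℕ} {s : ℤ}
    (h : M[k]? = some s) : s = 1 ∨ s = 0 ∨ s = -1 :=
  hM s (List.mem_of_getElem? h)

lemma expand_isDyck (M : List ℤ) (h : IsMotzkinPath M) (hg : NoGroundFlat M) :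
    IsDyckPath (expand M) := by
  obtain ⟨hM, hnn, hsum⟩ := h
  refine ⟨expand_steps M, ?_, by rw [expand_sum M hM, hsum]; ring⟩
  intro j
  rcases Nat.even_or_odd j with ⟨k, hk⟩ | ⟨k, hk⟩
  · rw [show j = 2 * k from by omega, expand_take_even M hM k]
    have := hnn k; omega
  · rw [show j = 2 * k + 1 from by omega, expand_take_odd M hM k]
    have hm := hnn k
    cases hMk : M[k]? with
    | none => simp; omega
    | some s =>
      rcases get?_valid hM hMk with rfl | rfl | rfl
      · simp [fst]; omega
      · have := hg k hMk
        simp [fst]; omega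
      · have hk' : k < M.length := by
          by_contra hc
          rw [List.getElem?_eq_none_iff.mpr (by omega)] at hMk; exact absurd hMk (by simp)
        have hs := List.sum_take_succ M k hk'
        have : M[k] = -1 := by
          have := List.getElem?_eq_getElem hk'
          rw [hMk] at this
          exact (Option.some_inj.mp this).symm
        rw [this] at hs
        have := hnn (k + 1)
        rw [hs] at this
        simp [fst]
        omega

lemma fst_eq_one {s : ℤ} (hs : s = 1 ∨ s = 0 ∨ s = -1) : fst s = 1 ↔ s = 1 := by
  rcases hs with rfl | rfl | rfl <;> simp [fst]

lemma snd_eq_negone {s : ℤ} (hs : s = 1 ∨ s = 0 ∨ s = -1) : snd s = -1 ↔ s = -1 := by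
  rcases hs with rfl | rfl | rfl <;> simp [snd]

lemma expand_allPeaksEven (M : List ℤ) (h : IsMotzkinPath M) :
    AllPeaksEven (expand M) := by
  obtain ⟨hM, hnn, hsum⟩ := h
  refine ⟨fun _ => Even.zero, ?_⟩
  rintro i ⟨h1, h2⟩
  rcases Nat.even_or_odd i with ⟨k, hk⟩ | ⟨k, hk⟩
  · exfalso
    rw [show i = 2 * k from by omega] at h1
    rw [show i + 1 = 2 * k + 1 from by omega] at h2
    rw [expand_get?_even] at h1
    rw [expand_get?_odd] at h2
    cases hMk : M[k]? with
    | none => rw [hMk] at h1; exact absurd h1 (by simp)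
    | some s =>
      rw [hMk] at h1 h2
      simp only [Option.map_some, Option.some_inj] at h1 h2
      rcases get?_valid hM hMk with rfl | rfl | rfl <;> simp [fst, snd] at h1 h2
  · rw [show i = 2 * k + 1 from by omega]
    unfold peakHeight
    rw [show 2 * k + 1 + 1 = 2 * (k + 1) from by omega, expand_take_even M hM]
    exact even_two_mul _

lemma card_filter_range_succ (p : ℕ → Prop) [DecidablePred p] (n : ℕ) :
    ((Finset.range (n + 1)).filter p).card
      = (if p 0 then 1 else 0) + ((Finset.range n).filter (fun i => p (i + 1))).card := by
  rw [Finset.card_filter, Finset.sum_range_succ', Finset.card_filter]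
  omega

lemma count_eq_card (L : List ℤ) (a : ℤ) :
    L.count a = ((Finset.range L.length).filter fun i => L[i]? = some a).card := by
  induction L with
  | nil => simp
  | cons b L ih =>
    rw [List.count_cons, List.length_cons, card_filter_range_succ]
    simp only [List.getElem?_cons_zero, List.getElem?_cons_succ, Option.some_inj]
    rw [← ih]
    rcases eq_or_ne b a with rfl | hba
    · simp [Nat.add_comm]
    · simp [hba, Ne.symm hba]

lemma get?_expand_odd_eq_one {M : List ℤ} (hM : ∀ s ∈ M, s = 1 ∨ s = 0 ∨ s = -1) (k : ℕ) :
    (expand M)[2 * k + 1]? = some 1 ↔ (M[k]? = some 1 ∨ M[k]? = some 0) := by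
  rw [expand_get?_odd]
  cases hMk : M[k]? with
  | none => simp
  | some s =>
    simp only [Option.map_some, Option.some_inj]
    rcases get?_valid hM hMk with rfl | rfl | rfl <;> simp [snd]

lemma get?_expand_odd_eq_neg {M : List ℤ} (hM : ∀ s ∈ M, s = 1 ∨ s = 0 ∨ s = -1) (k : ℕ) :
    (expand M)[2 * k + 1]? = some (-1) ↔ M[k]? = some (-1) := by
  rw [expand_get?_odd]
  cases hMk : M[k]? with
  | none => simp
  | some s =>
    simp only [Option.map_some, Option.some_inj]
    rcases get?_valid hM hMk with rfl | rfl | rfl <;> simp [snd]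

lemma get?_expand_even_eq_one {M : List ℤ} (hM : ∀ s ∈ M, s = 1 ∨ s = 0 ∨ s = -1) (k : ℕ) :
    (expand M)[2 * k]? = some 1 ↔ M[k]? = some 1 := by
  rw [expand_get?_even]
  cases hMk : M[k]? with
  | none => simp
  | some s =>
    simp only [Option.map_some, Option.some_inj]
    rcases get?_valid hM hMk with rfl | rfl | rfl <;> simp [fst]

lemma get?_expand_even_eq_neg {M : List ℤ} (hM : ∀ s ∈ M, s = 1 ∨ s = 0 ∨ s = -1) (k : ℕ) :
    (expand M)[2 * k]? = some (-1) ↔ (M[k]? = some 0 ∨ M[k]? = some (-1)) := by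
  rw [expand_get?_even]
  cases hMk : M[k]? with
  | none => simp
  | some s =>
    simp only [Option.map_some, Option.some_inj]
    rcases get?_valid hM hMk with rfl | rfl | rfl <;> simp [fst]

/-- The last step of a Motzkin path without ground flats is a downstep. -/
lemma last_not_up_or_flat {M : List ℤ} (h : IsMotzkinPath M) (hg : NoGroundFlat M)
    {k : ℕ} (hk : k + 1 = M.length) : ¬(M[k]? = some 1 ∨ M[k]? = some 0) := by
  obtain ⟨hM, hnn, hsum⟩ := h
  have hk' : k < M.length := by omega
  have hs := List.sum_take_succ M k hk'
  rw [show k + 1 = M.length from hk, List.take_length] at hs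
  rw [hsum] at hs
  have hget : M[k]? = some M[k] := List.getElem?_eq_getElem hk'
  rintro (hc | hc) <;> rw [hget, Option.some_inj] at hc
  · have := hnn k; omega
  · exact hg k (by rw [hget, hc]) (by omega)

/-- peak count of the expansion equals the statistic. -/
lemma peakCount_expand (M : List ℤ) (h : IsMotzkinPath M) (hg : NoGroundFlat M) :
    (peakCount (expand M) : ℤ)
      = ((M.count 1 : ℤ) - uuCount M) + ((M.count 0 : ℤ) - fuCount M) := by
  have hM := h.1
  set n := M.length with hn
  -- peakCount as a card over range n
  have hpk : peakCount (expand M)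
      = ((Finset.range n).filter fun k =>
          (M[k]? = some 1 ∨ M[k]? = some 0) ∧ ¬(M[k + 1]? = some 1)).card := by
    unfold peakCount
    apply Finset.card_nbij' (fun i => i / 2) (fun k => 2 * k + 1)
    · intro i hi
      simp only [Finset.mem_coe, Finset.mem_filter, Finset.mem_range, expand_length] at hi
      obtain ⟨hilen, h1, h2⟩ := hi
      rcases Nat.even_or_odd i with ⟨k, hk⟩ | ⟨k, hk⟩
      · exfalso
        rw [show i = 2 * k from by omega, get?_expand_even_eq_one hM] at h1
        rw [show i + 1 = 2 * k + 1 from by omega, get?_expand_odd_eq_neg hM] at h2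
        rw [h1] at h2
        exact absurd (Option.some_inj.mp h2) (by norm_num)
      · rw [show i = 2 * k + 1 from by omega, get?_expand_odd_eq_one hM] at h1
        rw [show i + 1 = 2 * (k + 1) from by omega, get?_expand_even_eq_neg hM] at h2
        simp only [Finset.mem_coe, Finset.mem_filter, Finset.mem_range]
        have hin : i / 2 = k := by omega
        rw [hin]
        refine ⟨?_, h1, ?_⟩
        · -- k < n : since M[k+1]? is some, k + 1 ≤ n, so k < n
          rcases h2 with h2 | h2 <;>
            · have := List.getElem?_eq_some_iff.mp h2
              omega
        · rintro hc
          rcases h2 with h2 | h2 <;> rw [hc] at h2 <;>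
            exact absurd (Option.some_inj.mp h2) (by norm_num)
    · intro k hk
      simp only [Finset.mem_coe, Finset.mem_filter, Finset.mem_range] at hk
      obtain ⟨hkn, h1, h2⟩ := hk
      simp only [Finset.mem_coe, Finset.mem_filter, Finset.mem_range, expand_length]
      refine ⟨by omega, (get?_expand_odd_eq_one hM k).mpr h1, ?_⟩
      rw [show 2 * k + 1 + 1 = 2 * (k + 1) from by omega, get?_expand_even_eq_neg hM]
      -- M[k+1]? is some t with t ≠ 1
      by_cases hklast : k + 1 = n
      · exact absurd h1 (last_not_up_or_flat h hg hklast)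
      · have hlt : k + 1 < n := by omega
        have : M[k + 1]? = some M[k + 1] := List.getElem?_eq_getElem hlt
        rcases get?_valid hM this with h3 | h3 | h3
        · exact absurd (by rw [this, h3]) h2
        · left; rw [this, h3]
        · right; rw [this, h3]
    · intro i hi
      simp only [Finset.mem_coe, Finset.mem_filter, Finset.mem_range, expand_length] at hi
      obtain ⟨hilen, h1, h2⟩ := hi
      -- i must be odd
      rcases Nat.even_or_odd i with ⟨k, hk⟩ | ⟨k, hk⟩
      · exfalso
        rw [show i = 2 * k from by omega, get?_expand_even_eq_one hM] at h1
        rw [show i + 1 = 2 * k + 1 from by omega, get?_expand_odd_eq_neg hM] at h2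
        rw [h1] at h2
        exact absurd (Option.some_inj.mp h2) (by norm_num)
      · show 2 * (i / 2) + 1 = i
        omega
    · intro k _
      show (2 * k + 1) / 2 = k
      omega
  rw [hpk]
  -- now pure index manipulation on range n
  have hcount1 := count_eq_card M 1
  have hcount0 := count_eq_card M 0
  rw [hcount1, hcount0]
  unfold uuCount fuCount
  rw [← hn]
  -- split count filters by the condition on the next step
  have split1 := Finset.card_filter_add_card_filter_not
    (s := (Finset.range n).filter fun i => M[i]? = some 1)
    (p := fun i => M[i + 1]? = some 1)
  rw [Finset.filter_filter, Finset.filter_filter] at split1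
  have split0 := Finset.card_filter_add_card_filter_not
    (s := (Finset.range n).filter fun i => M[i]? = some 0)
    (p := fun i => M[i + 1]? = some 1)
  rw [Finset.filter_filter, Finset.filter_filter] at split0
  -- disjoint union
  have hdisj : Disjoint
      ((Finset.range n).filter fun i => M[i]? = some 1 ∧ ¬(M[i + 1]? = some 1))
      ((Finset.range n).filter fun i => M[i]? = some 0 ∧ ¬(M[i + 1]? = some 1)) := by
    rw [Finset.disjoint_left]
    intro i hi hj
    simp only [Finset.mem_filter] at hi hj
    obtain ⟨-, ha, -⟩ := hi
    obtain ⟨-, hb, -⟩ := hj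
    rw [ha] at hb
    exact absurd (Option.some_inj.mp hb) (by norm_num)
  have hunion :
      ((Finset.range n).filter fun k =>
          (M[k]? = some 1 ∨ M[k]? = some 0) ∧ ¬(M[k + 1]? = some 1)).card
      = ((Finset.range n).filter fun i => M[i]? = some 1 ∧ ¬(M[i + 1]? = some 1)).card
      + ((Finset.range n).filter fun i => M[i]? = some 0 ∧ ¬(M[i + 1]? = some 1)).card := by
    rw [← Finset.card_union_of_disjoint hdisj, ← Finset.filter_or]
    congr 1
    apply Finset.filter_congr
    intro i _
    constructor
    · rintro ⟨h1 | h1, h2⟩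
      · exact Or.inl ⟨h1, h2⟩
      · exact Or.inr ⟨h1, h2⟩
    · rintro (⟨h1, h2⟩ | ⟨h1, h2⟩)
      · exact ⟨Or.inl h1, h2⟩
      · exact ⟨Or.inr h1, h2⟩
  rw [hunion]
  push_cast
  omega

lemma expand_inj {M M' : List ℤ} (hM : ∀ s ∈ M, s = 1 ∨ s = 0 ∨ s = -1)
    (hM' : ∀ s ∈ M', s = 1 ∨ s = 0 ∨ s = -1) (he : expand M = expand M') : M = M' := by
  have hlen : M.length = M'.length := by
    have := congrArg List.length he
    simp only [expand_length] at this
    omega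
  apply List.ext_getElem?
  intro k
  by_cases hk : k < M.length
  · have hk' : k < M'.length := hlen ▸ hk
    have h1 := expand_get?_even M k
    have h2 := expand_get?_odd M k
    rw [he, expand_get?_even] at h1
    rw [he, expand_get?_odd] at h2
    rw [List.getElem?_eq_getElem hk, List.getElem?_eq_getElem hk'] at h1 h2 ⊢
    simp only [Option.map_some, Option.some_inj] at h1 h2 ⊢
    have hv := hM _ (List.getElem_mem hk)
    have hv' := hM' _ (List.getElem_mem hk')
    rcases hv with h | h | h <;> rcases hv' with h' | h' | h' <;>
      rw [h, h'] at h1 h2 ⊢ <;> simp [fst, snd] at h1 h2 ⊢ <;> omega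
  · have e1 : M[k]? = none := List.getElem?_eq_none_iff.mpr (by omega)
    have e2 : M'[k]? = none := List.getElem?_eq_none_iff.mpr (by omega)
    rw [e1, e2]

lemma pairContract_cons (a b : ℤ) (P : List ℤ) :
    pairContract (a :: b :: P) = pairStep a b :: pairContract P := by
  unfold pairContract
  have hl : (a :: b :: P).length / 2 = P.length / 2 + 1 := by simp; omega
  rw [hl, List.range_succ_eq_map, List.map_cons, List.map_map]
  congr 1

lemma pairContract_steps (P : List ℤ) : ∀ s ∈ pairContract P, s = 1 ∨ s = 0 ∨ s = -1 := by
  intro s hs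
  unfold pairContract at hs
  rw [List.mem_map] at hs
  obtain ⟨k, _, hks⟩ := hs
  rw [← hks]
  unfold pairStep
  split_ifs <;> simp

lemma sum_add_length_even (L : List ℤ) (h : ∀ s ∈ L, s = 1 ∨ s = -1) :
    Even (L.sum + L.length) := by
  induction L with
  | nil => simp
  | cons a L ih =>
    obtain ⟨m, hm⟩ := ih (fun s hs => h s (by simp [hs]))
    rcases h a (by simp) with rfl | rfl
    · exact ⟨m + 1, by simp only [List.sum_cons, List.length_cons] at hm ⊢; push_cast at hm ⊢; omega⟩
    · exact ⟨m, by simp only [List.sum_cons, List.length_cons] at hm ⊢; push_cast at hm ⊢; omega⟩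

lemma expand_pairContract : ∀ (P : List ℤ), (∀ s ∈ P, s = 1 ∨ s = -1) → Even P.length →
    (∀ k, ¬(P[2 * k]? = some 1 ∧ P[2 * k + 1]? = some (-1))) →
    expand (pairContract P) = P
  | [], _, _, _ => by simp [pairContract]
  | [a], _, hev, _ => by simp at hev
  | a :: b :: P, hst, hev, hgood => by
    rw [pairContract_cons, expand_cons]
    have htail : expand (pairContract P) = P := by
      apply expand_pairContract P (fun s hs => hst s (by simp [hs]))
      · obtain ⟨m, hm⟩ := hev
        simp only [List.length_cons] at hm
        exact ⟨m - 1, by omega⟩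
      · intro k
        have := hgood (k + 1)
        rw [show 2 * (k + 1) = 2 * k + 1 + 1 from by omega] at this
        simpa using this
    rw [htail]
    have hblock : block (pairStep a b) = [a, b] := by
      have ha := hst a (by simp)
      have hb := hst b (by simp)
      have h0 := hgood 0
      simp only [Nat.mul_zero, Nat.zero_add, List.getElem?_cons_zero, List.getElem?_cons_succ,
        Option.some_inj] at h0
      rcases ha with rfl | rfl <;> rcases hb with rfl | rfl
      · simp [pairStep, block]
      · exact absurd ⟨rfl, rfl⟩ h0
      · norm_num [pairStep, block]
      · norm_num [pairStep, block]
    rw [hblock]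
    rfl

lemma pairs_good {P : List ℤ} (hd : IsDyckPath P) (he : AllPeaksEven P) :
    ∀ k, ¬(P[2 * k]? = some 1 ∧ P[2 * k + 1]? = some (-1)) := by
  rintro k ⟨h1, h2⟩
  obtain ⟨hst, hnn, hsum⟩ := hd
  have hpeak := he.2 (2 * k) ⟨h1, h2⟩
  unfold peakHeight at hpeak
  have hk : 2 * k < P.length := (List.getElem?_eq_some_iff.mp h1).1
  have hPk : P[2 * k] = 1 := by
    have := List.getElem?_eq_getElem hk
    rw [h1] at this
    exact (Option.some_inj.mp this).symm
  have hs := List.sum_take_succ P (2 * k) hk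
  rw [hPk] at hs
  -- parity of the prefix
  have hpar := sum_add_length_even (P.take (2 * k))
    (fun s hs => hst s (List.mem_of_mem_take hs))
  have hparfull := sum_add_length_even P hst
  rw [hsum] at hparfull
  have hlen : (P.take (2 * k)).length = 2 * k := by
    rw [List.length_take]
    omega
  rw [hlen] at hpar
  obtain ⟨m1, hm1⟩ := hpar
  obtain ⟨m2, hm2⟩ := hpeak
  push_cast at hm1
  omega

lemma contract_motzkin {P M : List ℤ} (hd : IsDyckPath P)
    (hMst : ∀ s ∈ M, s = 1 ∨ s = 0 ∨ s = -1) (hexp : expand M = P) :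
    IsMotzkinPath M ∧ NoGroundFlat M := by
  obtain ⟨hst, hnn, hsum⟩ := hd
  refine ⟨⟨hMst, ?_, ?_⟩, ?_⟩
  · intro k
    have h := expand_take_even M hMst k
    rw [hexp] at h
    have := hnn (2 * k)
    omega
  · have h := expand_sum M hMst
    rw [hexp, hsum] at h
    omega
  · intro i hi hz
    have h := expand_take_odd M hMst i
    rw [hexp, hi, hz] at h
    simp only [Option.map_some, Option.getD_some] at h
    have hf : fst 0 = -1 := by simp [fst]
    rw [hf] at h
    have := hnn (2 * i + 1)
    omega

end EvenPeaksAux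

open EvenPeaksAux in
/-- For `n ≥ 0` and `p ≥ 0`, the number of Dyck paths of semilength `n` with all peaks at
even height and exactly `p` peaks equals the number of Motzkin paths `M` of length `n`
with no flatstep at ground level that satisfy `(u(M) - uu(M)) + (f(M) - fu(M)) = p`. -/
theorem even_peaks_count_statistic (n p : ℕ) :
    {P : List ℤ | P.length = 2 * n ∧ IsDyckPath P ∧ AllPeaksEven P ∧
      peakCount P = p}.ncard =
    {M : List ℤ | M.length = n ∧ IsMotzkinPath M ∧ NoGroundFlat M ∧
      ((M.count 1 : ℤ) - uuCount M) + ((M.count 0 : ℤ) - fuCount M) = p}.ncard := by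
  have himage :
      {P : List ℤ | P.length = 2 * n ∧ IsDyckPath P ∧ AllPeaksEven P ∧ peakCount P = p}
        = expand '' {M : List ℤ | M.length = n ∧ IsMotzkinPath M ∧ NoGroundFlat M ∧
            ((M.count 1 : ℤ) - uuCount M) + ((M.count 0 : ℤ) - fuCount M) = p} := by
    ext P
    simp only [Set.mem_setOf_eq, Set.mem_image]
    constructor
    · rintro ⟨hlen, hd, he, hpc⟩
      have hexp : expand (pairContract P) = P :=
        expand_pairContract P hd.1 ⟨n, by omega⟩ (pairs_good hd he)
      obtain ⟨hMz, hgf⟩ := contract_motzkin hd (pairContract_steps P) hexp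
      have hlenM : (pairContract P).length = n := by
        have := congrArg List.length hexp
        rw [expand_length] at this
        omega
      have hstat := peakCount_expand _ hMz hgf
      rw [hexp, hpc] at hstat
      exact ⟨pairContract P, ⟨hlenM, hMz, hgf, hstat.symm⟩, hexp⟩
    · rintro ⟨M, ⟨hlen, hMz, hgf, hstat⟩, rfl⟩
      refine ⟨by rw [expand_length, hlen], expand_isDyck M hMz hgf,
        expand_allPeaksEven M hMz, ?_⟩
      have hc := peakCount_expand M hMz hgf
      rw [hstat] at hc
      exact_mod_cast hc
  rw [himage]
  rw [Set.ncard_image_of_injOn]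
  intro M hM M' hM' he
  exact expand_inj hM.2.1.1 hM'.2.1.1 he
end

section
/- Let P be a nonempty Dyck path with exactly k downsteps ending at ground level. Then P decomposes uniquely as the concatenation U P₁ D U P₂ D ⋯ U P_k D, where P₁, ..., P_k are (possibly empty) Dyck paths; moreover, every peak of P occurs at odd (respectively even) height if and only if, for each i, every peak of P_i occurs at even (respectively odd) height, where the empty Dyck path is considered to have one peak at height 0. -/
lemma dyck_head {P : List ℤ} (h : IsDyckPath P) (hne : P ≠ []) : ∃ t, P = 1 :: t := by
  obtain ⟨a, t, rfl⟩ := List.exists_cons_of_ne_nil hne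
  have h1 := h.2.1 1
  simp [List.take_succ_cons] at h1
  rcases h.1 a (by simp) with rfl | rfl
  · exact ⟨t, rfl⟩
  · omega

lemma first_return {P : List ℤ} (h : IsDyckPath P) (hne : P ≠ []) :
    ∃ Q R, IsDyckPath Q ∧ IsDyckPath R ∧ P = (1 :: (Q ++ [-1])) ++ R := by
  obtain ⟨t, rfl⟩ := dyck_head h hne
  set P : List ℤ := 1 :: t with hPdef
  have hex : ∃ m, 0 < m ∧ (P.take m).sum = 0 := by
    refine ⟨P.length, by simp [hPdef], by simp [h.2.2]⟩
  classical
  obtain ⟨n, hn0, hmin', hnlen⟩ : ∃ n, (0 < n ∧ (P.take n).sum = 0) ∧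
      (∀ m, m < n → ¬(0 < m ∧ (P.take m).sum = 0)) ∧ n ≤ P.length :=
    ⟨Nat.find hex, Nat.find_spec hex, fun m hm => Nat.find_min hex hm,
      Nat.find_le ⟨by simp [hPdef], by simp [h.2.2]⟩⟩
  have hmin : ∀ m, 0 < m → m < n → 1 ≤ (P.take m).sum := by
    intro m hm hmn
    have h1 := hmin' m hmn
    have h2 := h.2.1 m
    have : ¬ (P.take m).sum = 0 := fun hc => h1 ⟨hm, hc⟩
    omega
  have hn2 : 2 ≤ n := by
    rcases Nat.lt_or_ge n 2 with hlt | hge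
    · interval_cases n
      · omega
      · have := hn0.2; simp [hPdef] at this
    · exact hge
  obtain ⟨m, rfl⟩ : ∃ m, n = m + 2 := ⟨n - 2, by omega⟩
  -- the step ending the first return
  have hget : P[m + 1]? = some (-1) ∧ (P.take (m + 1)).sum = 1 := by
    have hlt : m + 1 < P.length := by omega
    have hsome : P[m + 1]? = some (P[m + 1]) := List.getElem?_eq_getElem hlt
    have hmem : P[m + 1] ∈ P := List.getElem_mem hlt
    have hstep := h.1 _ hmem
    have htk : P.take (m + 1 + 1) = P.take (m + 1) ++ P[m + 1]?.toList := List.take_succ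
    rw [hsome] at htk
    have hsum2 := hn0.2
    rw [show m + 2 = m + 1 + 1 from rfl, htk, List.sum_append] at hsum2
    simp at hsum2
    have h1 := hmin (m + 1) (by omega) (by omega)
    constructor
    · rw [hsome]; congr 1; omega
    · omega
  refine ⟨t.take m, t.drop (m + 1), ?_, ?_, ?_⟩
  · -- Q is Dyck
    refine ⟨fun s hs => h.1 s (by simp [hPdef]; right; exact List.mem_of_mem_take hs), ?_, ?_⟩
    · intro j
      rw [List.take_take]
      set j' := min j m with hj'
      have hj'm : j' ≤ m := min_le_right _ _
      have := hmin (j' + 1) (by omega) (by omega)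
      have htk : P.take (j' + 1) = 1 :: t.take j' := by simp [hPdef]
      rw [htk] at this
      simp at this
      omega
    · have h1 := hget.2
      have htk : P.take (m + 1) = 1 :: t.take m := by simp [hPdef]
      rw [htk] at h1
      simp at h1
      omega
  · -- R is Dyck
    have hdrop : P.drop (m + 2) = t.drop (m + 1) := by simp [hPdef]
    refine ⟨fun s hs => h.1 s (by simp [hPdef]; right; exact List.mem_of_mem_drop hs), ?_, ?_⟩
    · intro j
      have := h.2.1 (m + 2 + j)
      rw [List.take_add, List.sum_append, hn0.2] at this
      simpa [hdrop] using this
    · have : P.sum = (P.take (m+2)).sum + (P.drop (m+2)).sum := by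
        conv_lhs => rw [← List.take_append_drop (m+2) P]
        simp
      rw [h.2.2, hn0.2, hdrop] at this
      omega
  · -- decomposition equation
    have hg : t[m]? = some (-1) := by
      have := hget.1
      simpa [hPdef] using this
    have htk : t.take (m + 1) = t.take m ++ [-1] := by
      rw [List.take_succ, hg]
      rfl
    conv_lhs => rw [hPdef, ← List.take_append_drop (m + 1) t, htk]
    simp

lemma dyck_flatten_decomp : ∀ (n : ℕ) (P : List ℤ), P.length = n → IsDyckPath P →
    ∃ Ps : List (List ℤ), (∀ Q ∈ Ps, IsDyckPath Q) ∧
      P = (Ps.map fun Q => 1 :: (Q ++ [-1])).flatten := by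
  intro n
  induction n using Nat.strong_induction_on with
  | _ n ih =>
    intro P hlen hP
    rcases eq_or_ne P [] with rfl | hne
    · exact ⟨[], by simp, by simp⟩
    · obtain ⟨Q, R, hQ, hR, hPeq⟩ := first_return hP hne
      have hRlen : R.length < n := by
        rw [← hlen, hPeq]; simp; omega
      obtain ⟨Ps, hPs1, hPs2⟩ := ih R.length hRlen R rfl hR
      refine ⟨Q :: Ps, ?_, ?_⟩
      · intro S hS
        rcases List.mem_cons.mp hS with rfl | hS
        · exact hQ
        · exact hPs1 S hS
      · simp only [List.map_cons, List.flatten_cons, ← hPs2, hPeq]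

lemma not_lt_len {Q Q' A B : List ℤ} (hQ : IsDyckPath Q) (hQ' : IsDyckPath Q')
    (h : Q ++ (-1 :: A) = Q' ++ (-1 :: B)) : ¬ Q.length < Q'.length := by
  intro hlt
  have h1 : (Q ++ (-1 :: A)).take (Q.length + 1) = Q ++ [-1] := by
    rw [show Q.length + 1 = Q.length + 1 from rfl, List.take_length_add_append]
    rfl
  have h2 : (Q' ++ (-1 :: B)).take (Q.length + 1) = Q'.take (Q.length + 1) :=
    List.take_append_of_le_length (by omega)
  rw [h, h2] at h1
  have h3 := hQ'.2.1 (Q.length + 1)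
  rw [h1] at h3
  simp [hQ.2.2] at h3

lemma flatten_unique : ∀ (Ps Ps' : List (List ℤ)), (∀ Q ∈ Ps, IsDyckPath Q) →
    (∀ Q ∈ Ps', IsDyckPath Q) →
    (Ps.map fun Q => 1 :: (Q ++ [-1])).flatten = (Ps'.map fun Q => 1 :: (Q ++ [-1])).flatten →
    Ps = Ps' := by
  intro Ps
  induction Ps with
  | nil =>
    intro Ps' _ _ h
    cases Ps' with
    | nil => rfl
    | cons Q t => simp at h
  | cons Q t ihp =>
    intro Ps' hd hd' h
    cases Ps' with
    | nil => simp at h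
    | cons Q' t' =>
      simp only [List.map_cons, List.flatten_cons, List.cons_append, List.append_assoc] at h
      rw [List.cons.injEq] at h
      have h2 : Q ++ (-1 :: (t.map fun Q => 1 :: (Q ++ [-1])).flatten)
          = Q' ++ (-1 :: (t'.map fun Q => 1 :: (Q ++ [-1])).flatten) := by
        simpa using h.2
      have hQ := hd Q (by simp)
      have hQ' := hd' Q' (by simp)
      have hlen : Q.length = Q'.length := by
        have := not_lt_len hQ hQ' h2
        have := not_lt_len hQ' hQ h2.symm
        omega
      obtain ⟨hq, htail⟩ := List.append_inj h2 hlen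
      rw [List.cons.injEq] at htail
      have := ihp t' (fun S hS => hd S (by simp [hS])) (fun S hS => hd' S (by simp [hS])) htail.2
      rw [hq, this]

lemma gdc_append (A B : List ℤ) (hA : A.sum = 0) :
    groundDownCount (A ++ B) = groundDownCount A + groundDownCount B := by
  classical
  unfold groundDownCount
  rw [List.length_append, Finset.range_add, Finset.filter_union, Finset.filter_map,
    Finset.card_union_of_disjoint, Finset.card_map]
  · congr 1
    · apply congrArg Finset.card
      apply Finset.filter_congr
      intro i hi
      rw [Finset.mem_range] at hi
      have hg : (A ++ B)[i]? = A[i]? := List.getElem?_append_left hi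
      have ht : (A ++ B).take (i + 1) = A.take (i + 1) :=
        List.take_append_of_le_length (by omega)
      simp only [hg, ht]
    · apply congrArg Finset.card
      apply Finset.filter_congr
      intro j hj
      rw [Finset.mem_range] at hj
      have hg : (A ++ B)[A.length + j]? = B[j]? := by
        rw [List.getElem?_append_right (by omega)]
        congr 1
        omega
      have ht : ((A ++ B).take (A.length + j + 1)).sum = (B.take (j + 1)).sum := by
        rw [show A.length + j + 1 = A.length + (j + 1) from by omega, List.take_length_add_append,
          List.sum_append, hA, zero_add]
      simp only [Function.comp, addLeftEmbedding_apply, hg, ht]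
  · rw [Finset.disjoint_left]
    intro i hi hi'
    rw [Finset.mem_filter, Finset.mem_range] at hi
    rw [Finset.mem_map] at hi'
    obtain ⟨j, hj, hji⟩ := hi' 
    simp only [addLeftEmbedding_apply] at hji
    omega

lemma gdc_block (Q : List ℤ) (hQ : IsDyckPath Q) :
    groundDownCount (1 :: (Q ++ [-1])) = 1 := by
  classical
  unfold groundDownCount
  have hlen : (1 :: (Q ++ [-1]) : List ℤ).length = Q.length + 2 := by simp
  rw [hlen]
  have : ((Finset.range (Q.length + 2)).filter fun i =>
      (1 :: (Q ++ [-1]) : List ℤ)[i]? = some (-1) ∧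
      ((1 :: (Q ++ [-1]) : List ℤ).take (i + 1)).sum = 0) = {Q.length + 1} := by
    ext i
    simp only [Finset.mem_filter, Finset.mem_range, Finset.mem_singleton]
    constructor
    · rintro ⟨hi, _, hsum⟩
      by_contra hne
      have hile : i ≤ Q.length := by omega
      have ht : (1 :: (Q ++ [-1]) : List ℤ).take (i + 1) = 1 :: (Q.take i) := by
        rw [List.take_succ_cons, List.take_append_of_le_length hile]
      rw [ht] at hsum
      have := hQ.2.1 i
      simp at hsum
      omega
    · rintro rfl
      refine ⟨by omega, ?_, ?_⟩
      · rw [List.getElem?_cons_succ,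
          List.getElem?_append_right (le_refl _)]
        simp
      · have : (1 :: (Q ++ [-1]) : List ℤ).take (Q.length + 2) = 1 :: (Q ++ [-1]) := by
          rw [List.take_of_length_le (by simp)]
        rw [this]
        simp [hQ.2.2]
  rw [this]
  simp

lemma gdc_flatten : ∀ (Ps : List (List ℤ)), (∀ Q ∈ Ps, IsDyckPath Q) →
    groundDownCount ((Ps.map fun Q => 1 :: (Q ++ [-1])).flatten) = Ps.length := by
  intro Ps
  induction Ps with
  | nil => intro _; simp [groundDownCount]
  | cons Q t ih =>
    intro hd
    have hQ := hd Q (by simp)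
    simp only [List.map_cons, List.flatten_cons]
    rw [gdc_append _ _ (by simp [hQ.2.2]), gdc_block Q hQ, ih (fun S hS => hd S (by simp [hS]))]
    simp [add_comm]

lemma peaks_block_append (Q R : List ℤ) (hQ : IsDyckPath Q) (p q : ℤ → Prop)
    (hpq : ∀ h : ℤ, p (1 + h) ↔ q h) :
    (∀ i, IsPeak ((1 :: (Q ++ [-1])) ++ R) i →
        p (peakHeight ((1 :: (Q ++ [-1])) ++ R) i))
    ↔ ((Q = [] → q 0) ∧ (∀ j, IsPeak Q j → q (peakHeight Q j)) ∧
       (∀ j, IsPeak R j → p (peakHeight R j))) := by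
  set P := (1 :: (Q ++ [-1])) ++ R with hPdef
  have hP : P = 1 :: (Q ++ (-1 :: R)) := by simp [hPdef]
  have hL : (1 :: (Q ++ [-1]) : List ℤ).length = Q.length + 2 := by simp
  have h0 : peakHeight P 0 = 1 := by simp [peakHeight, hP]
  have hmid : ∀ j, j + 1 ≤ Q.length → peakHeight P (j + 1) = 1 + peakHeight Q j := by
    intro j hj
    unfold peakHeight
    rw [hP, List.take_succ_cons, List.take_append_of_le_length hj]
    simp
  have hright : ∀ j, peakHeight P (Q.length + 2 + j) = peakHeight R j := by
    intro j
    unfold peakHeight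
    rw [hPdef, show Q.length + 2 + j + 1 = Q.length + 2 + (j + 1) from by omega,
      ← hL, List.take_length_add_append, List.sum_append]
    simp [hQ.2.2]
  constructor
  · intro H
    refine ⟨?_, ?_, ?_⟩
    · rintro rfl
      have hpk : IsPeak P 0 := by
        constructor <;> simp [IsPeak, hP]
      have := H 0 hpk
      rw [h0, show (1 : ℤ) = 1 + 0 from by ring, hpq 0] at this
      exact this
    · intro j hj
      have hjlt : j + 1 < Q.length := by
        have := hj.2
        exact (List.getElem?_eq_some_iff.mp this).1
      have hpk : IsPeak P (j + 1) := by
        constructor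
        · rw [hP]
          rw [List.getElem?_cons_succ,
            List.getElem?_append_left (by omega)]
          exact hj.1
        · rw [hP]
          rw [List.getElem?_cons_succ,
            List.getElem?_append_left (by omega)]
          exact hj.2
      have := H (j + 1) hpk
      rw [hmid j (by omega), hpq] at this
      exact this
    · intro j hj
      have hpk : IsPeak P (Q.length + 2 + j) := by
        constructor
        · rw [hPdef,
            List.getElem?_append_right (by rw [hL]; omega), hL,
            show Q.length + 2 + j - (Q.length + 2) = j from by omega]
          exact hj.1
        · rw [hPdef,
            List.getElem?_append_right (by rw [hL]; omega), hL,
            show Q.length + 2 + j + 1 - (Q.length + 2) = j + 1 from by omega]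
          exact hj.2
      have := H (Q.length + 2 + j) hpk
      rw [hright j] at this
      exact this
  · rintro ⟨h1, h2, h3⟩ i hpk
    obtain ⟨hg1, hg2⟩ := hpk
    rw [hP] at hg1 hg2
    match i with
    | 0 =>
      rw [List.getElem?_cons_succ] at hg2
      have hQnil : Q = [] := by
        rcases eq_or_ne Q [] with h | h
        · exact h
        · obtain ⟨t, ht⟩ := dyck_head hQ h
          rw [ht] at hg2
          simp at hg2
      rw [h0, show (1 : ℤ) = 1 + 0 from by ring, hpq 0]
      exact h1 hQnil
    | (j + 1) =>
      rw [List.getElem?_cons_succ] at hg1 hg2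
      rcases Nat.lt_or_ge j Q.length with hjlt | hjge
      · rw [List.getElem?_append_left hjlt] at hg1
        rcases Nat.lt_or_ge (j + 1) Q.length with hj1 | hj1
        · rw [List.getElem?_append_left hj1] at hg2
          have hpkQ : IsPeak Q j := by
            rw [IsPeak]
            exact ⟨hg1, hg2⟩
          rw [hmid j (by omega), hpq]
          exact h2 j hpkQ
        · -- j + 1 = Q.length, Q ends with an upstep: contradiction
          exfalso
          have hj1' : j + 1 = Q.length := by omega
          have htk : Q.take (j + 1) = Q.take j ++ Q[j]?.toList := List.take_succ
          rw [hg1] at htk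
          have htQ : Q.take (j + 1) = Q := by
            rw [hj1']; exact List.take_length (l := Q)
          rw [htQ] at htk
          have hs : Q.sum = (Q.take j).sum + 1 := by
            rw [htk] at *
            conv_lhs => rw [htk]
            simp
          have := hQ.2.1 j
          rw [hQ.2.2] at hs
          omega
      · rcases Nat.eq_or_lt_of_le hjge with hje | hjgt
        · exfalso
          rw [List.getElem?_append_right (by omega),
            show j - Q.length = 0 from by omega] at hg1
          simp at hg1
        · obtain ⟨j', rfl⟩ : ∃ j', j = Q.length + 1 + j' := ⟨j - Q.length - 1, by omega⟩
          rw [List.getElem?_append_right (by omega),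
            show Q.length + 1 + j' - Q.length = j' + 1 from by omega,
            List.getElem?_cons_succ] at hg1
          rw [List.getElem?_append_right (by omega),
            show Q.length + 1 + j' + 1 - Q.length = j' + 1 + 1 from by omega,
            List.getElem?_cons_succ] at hg2
          have hpkR : IsPeak R j' := by
            rw [IsPeak]
            exact ⟨hg1, hg2⟩
          rw [show Q.length + 1 + j' + 1 = Q.length + 2 + j' from by omega, hright j']
          exact h3 j' hpkR

lemma peaks_flatten (p q : ℤ → Prop) (hpq : ∀ h : ℤ, p (1 + h) ↔ q h) :
    ∀ (Ps : List (List ℤ)), (∀ Q ∈ Ps, IsDyckPath Q) →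
    ((∀ i, IsPeak ((Ps.map fun Q => 1 :: (Q ++ [-1])).flatten) i →
        p (peakHeight ((Ps.map fun Q => 1 :: (Q ++ [-1])).flatten) i)) ↔
      ∀ Q ∈ Ps, ((Q = [] → q 0) ∧ ∀ j, IsPeak Q j → q (peakHeight Q j))) := by
  intro Ps
  induction Ps with
  | nil =>
    intro _
    simp only [List.map_nil, List.flatten_nil]
    constructor
    · intro _ Q hQ; simp at hQ
    · intro _ i hpk
      have := hpk.1
      simp at this
  | cons Q t ih =>
    intro hd
    have hQ := hd Q (by simp)
    simp only [List.map_cons, List.flatten_cons]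
    rw [peaks_block_append Q _ hQ p q hpq, ih (fun S hS => hd S (by simp [hS]))]
    constructor
    · rintro ⟨ha, hb, hc⟩ S hS
      rcases List.mem_cons.mp hS with rfl | hS
      · exact ⟨ha, hb⟩
      · exact hc S hS
    · intro h
      exact ⟨(h Q (by simp)).1, (h Q (by simp)).2, fun S hS => h S (by simp [hS])⟩

lemma odd_shift : ∀ h : ℤ, Odd (1 + h) ↔ Even h := by
  intro h; rw [Int.odd_iff, Int.even_iff]; omega

lemma even_shift : ∀ h : ℤ, Even (1 + h) ↔ Odd h := by
  intro h; rw [Int.odd_iff, Int.even_iff]; omega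

/-- A nonempty Dyck path `P` with exactly `k` downsteps ending at ground level decomposes
uniquely as `U P₁ D U P₂ D ⋯ U P_k D` with each `Pᵢ` a (possibly empty) Dyck path;
moreover `P` has all peaks at odd (resp. even) height iff every `Pᵢ` has all peaks at
even (resp. odd) height (with the convention that the empty path has one peak at
height 0). -/
theorem dyck_component_decomposition (P : List ℤ) (hP : IsDyckPath P) (hne : P ≠ [])
    (k : ℕ) (hk : groundDownCount P = k) :
    (∃! Ps : List (List ℤ), Ps.length = k ∧ (∀ Q ∈ Ps, IsDyckPath Q) ∧
      P = (Ps.map fun Q => 1 :: (Q ++ [-1])).flatten) ∧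
    (∀ Ps : List (List ℤ), Ps.length = k → (∀ Q ∈ Ps, IsDyckPath Q) →
      P = (Ps.map fun Q => 1 :: (Q ++ [-1])).flatten →
      ((AllPeaksOdd P ↔ ∀ Q ∈ Ps, AllPeaksEven Q) ∧
       (AllPeaksEven P ↔ ∀ Q ∈ Ps, AllPeaksOdd Q))) := by
  constructor
  · obtain ⟨Ps, hPs1, hPs2⟩ := dyck_flatten_decomp P.length P rfl hP
    have hlen : Ps.length = k := by rw [← hk, hPs2, gdc_flatten Ps hPs1]
    refine ⟨Ps, ⟨hlen, hPs1, hPs2⟩, ?_⟩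
    rintro Ps' ⟨_, hd', he'⟩
    exact flatten_unique Ps' Ps hd' hPs1 (he'.symm.trans hPs2)
  · intro Ps hlen hd heq
    constructor
    · have hiff := peaks_flatten Odd Even odd_shift Ps hd
      rw [← heq] at hiff
      constructor
      · intro h Q hQPs
        exact (hiff.mp h.2) Q hQPs
      · intro h
        exact ⟨fun he => absurd he hne, hiff.mpr h⟩
    · have hiff := peaks_flatten Even Odd even_shift Ps hd
      rw [← heq] at hiff
      constructor
      · intro h Q hQPs
        exact (hiff.mp h.2) Q hQPs
      · intro h
        exact ⟨fun he => absurd he hne, hiff.mpr h⟩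
end
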